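/- arXiv:1812.08242 — 3 statements merged into one kernel-verified Lean document; each statement's English description precedes it below -/
import Mathlib

section
/- Assume V is symmetric positive definite with the completeness property and the square roots ω_1,…,ω_n of its eigenvalues are linearly independent over ℚ, and J satisfies Condition 2. For t_1,…,t_m ≥ 0 and u_1,…,u_m ∈ O_ξ define iteratively J_1(t_1,u_1;ψ) = J_L(u_1; e^{t_1 A}ψ) and J_m(t_1,u_1,…,t_m,u_m;ψ) = J_L(u_m; e^{t_m A} J_{m−1}(t_1,u_1,…,t_{m−1},u_{m−1};ψ)). Then there exists an integer m ≥ 1 such that for every ψ ∈ L the reachable set 𝒥_m(ψ) = {J_m(t_1,u_1,…,t_m,u_m;ψ) : t_i ≥ 0, u_i ∈ O_ξ} equals all of L. -/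
/-!
Two consecutive collisions replace the first momentum `p₁` by an arbitrary vector: the first one
gives `p₁` the desired length, the second rotates it into place. Combined with free flights this
realises the kicks `χ ↦ e^{tA} χ + c e`, where `e` is the unit vector of the first momentum
coordinate.

Completeness of `V` makes `e` a cyclic vector of `A`. The span of the forward orbit
`{e^{sA} e : s ≥ 0}` is closed, so it contains the right derivatives `A e^{sA} e` and is
`A`-invariant; hence it is all of `L`. Choose orbit points `e^{σᵢ A} e` spanning `L`. Kicks applied
in order of decreasing `σᵢ` lead, after one more free flight, to `e^{TA} ψ + ∑ cᵢ e^{σᵢ A} e`,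
which is the target `φ` for suitable `cᵢ`; two last collisions restore the first momentum of `φ`.
-/

open Matrix MeasureTheory

/-- Index for the coordinates of one block (particle `i`, component `j`). -/
abbrev PIdx (N d : ℕ) := Fin N × Fin d

/-- The phase space `L = ℝ^{2n}`, `n = dN`: positions indexed by `Sum.inl`, momenta by
`Sum.inr`. -/
abbrev Phase (N d : ℕ) := (PIdx N d ⊕ PIdx N d) → ℝ

/-- The Hamiltonian matrix `A = [[0, (1/M)I], [−V, 0]]`. -/
noncomputable def hamMatrix {N d : ℕ} (M : ℝ) (V : Matrix (PIdx N d) (PIdx N d) ℝ) :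
    Matrix (PIdx N d ⊕ PIdx N d) (PIdx N d ⊕ PIdx N d) ℝ :=
  Matrix.fromBlocks 0 ((1 / M) • 1) (-V) 0

/-- The momentum `p₁ ∈ ℝ^d` of particle 1. -/
def mom1 {N d : ℕ} (hN : 0 < N) (ψ : Phase N d) : Fin d → ℝ :=
  fun j => ψ (Sum.inr ((⟨0, hN⟩ : Fin N), j))

/-- The collision map on phase space: `J_L(u;(q,p)) = (q,p')` with `p'₁ = J(u,p₁)` and
`p'ᵢ = pᵢ` for `i > 1`. -/
def JL {N d l : ℕ} (hN : 0 < N) (J : (Fin l → ℝ) → (Fin d → ℝ) → (Fin d → ℝ))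
    (u : Fin l → ℝ) (ψ : Phase N d) : Phase N d := fun z =>
  match z with
  | Sum.inl x => ψ (Sum.inl x)
  | Sum.inr x => if x.1 = (⟨0, hN⟩ : Fin N) then J u (mom1 hN ψ) x.2 else ψ (Sum.inr x)

/-- The iterated collision maps: `J_0(ψ) = ψ` and
`J_{m+1}(t_0,u_0,…,t_m,u_m; ψ) = J_L(u_m; e^{t_m A} J_m(t_0,u_0,…;ψ))`. -/
noncomputable def Jiter {N d l : ℕ} (hN : 0 < N) (M : ℝ)
    (V : Matrix (PIdx N d) (PIdx N d) ℝ)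
    (J : (Fin l → ℝ) → (Fin d → ℝ) → (Fin d → ℝ))
    (ts : ℕ → ℝ) (us : ℕ → Fin l → ℝ) (ψ : Phase N d) : ℕ → Phase N d
  | 0 => ψ
  | m + 1 =>
      JL hN J (us m)
        ((NormedSpace.exp (ts m • hamMatrix M V)).mulVec (Jiter hN M V J ts us ψ m))

open NormedSpace Set Submodule Function Finset

section ExpFlow
variable {ι : Type*} [Fintype ι] [DecidableEq ι]

theorem hasDerivAt_exp_smul_mulVec (A : Matrix ι ι ℝ) (b : ι → ℝ) (t : ℝ) :
    HasDerivAt (fun s : ℝ => exp (s • A) *ᵥ b) (A *ᵥ (exp (t • A) *ᵥ b)) t := by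
  -- matrices carry no global norm; any algebra norm works, as `exp` does not depend on it
  let _ := Matrix.linftyOpNormedRing (n := ι) (α := ℝ)
  let _ := Matrix.linftyOpNormedAlgebra (n := ι) (R := ℝ) (α := ℝ)
  let evalAt : Matrix ι ι ℝ →L[ℝ] ι → ℝ :=
    ((mulVecBilin ℝ ℝ).flip b).toContinuousLinearMap
  rw [mulVec_mulVec]
  exact evalAt.hasFDerivAt.comp_hasDerivAt t (hasDerivAt_exp_smul_const' A t)

theorem exp_smul_mulVec_exp_smul_mulVec (A : Matrix ι ι ℝ) (s t : ℝ) (x : ι → ℝ) :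
    exp (s • A) *ᵥ (exp (t • A) *ᵥ x) = exp ((s + t) • A) *ᵥ x := by
  rw [mulVec_mulVec, add_smul,
    Matrix.exp_add_of_commute _ _ (((Commute.refl A).smul_left s).smul_right t)]

theorem mulVec_mem_span_exp_smul_mulVec (A : Matrix ι ι ℝ) (b : ι → ℝ) {x : ι → ℝ}
    (hx : x ∈ span ℝ ((fun s : ℝ => exp (s • A) *ᵥ b) '' Ici 0)) :
    A *ᵥ x ∈ span ℝ ((fun s : ℝ => exp (s • A) *ᵥ b) '' Ici 0) := by
  set S := span ℝ ((fun s : ℝ => exp (s • A) *ᵥ b) '' Ici 0)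
  have hgen : ∀ t : ℝ, 0 ≤ t → A *ᵥ (exp (t • A) *ᵥ b) ∈ S := by
    intro t ht
    -- the derivative at `t` is a limit of difference quotients from the right, all in `S`
    have hslope := (hasDerivWithinAt_iff_tendsto_slope' (s := Ioi t) (lt_irrefl t)).1
      (hasDerivAt_exp_smul_mulVec A b t).hasDerivWithinAt
    refine S.closed_of_finiteDimensional.mem_of_tendsto hslope ?_
    filter_upwards [self_mem_nhdsWithin] with s hs
    exact S.smul_mem _ (S.sub_mem (subset_span ⟨s, ht.trans hs.le, rfl⟩)
      (subset_span ⟨t, ht, rfl⟩))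
  induction hx using Submodule.span_induction with
  | mem x hx => obtain ⟨t, ht, rfl⟩ := hx; exact hgen t ht
  | zero => simp
  | add x y _ _ hx hy => simpa [mulVec_add] using S.add_mem hx hy
  | smul c x _ hx => simpa [mulVec_smul] using S.smul_mem c hx

end ExpFlow

section Hamiltonian
variable {N d : ℕ}

theorem hamMatrix_mulVec (M : ℝ) (V : Matrix (PIdx N d) (PIdx N d) ℝ) (ψ : Phase N d) :
    hamMatrix M V *ᵥ ψ = Sum.elim ((1 / M) • (ψ ∘ Sum.inr)) (-(V *ᵥ (ψ ∘ Sum.inl))) := by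
  simp [hamMatrix, fromBlocks_mulVec, smul_mulVec, neg_mulVec]

theorem eq_top_of_hamMatrix_mulVec_mem {M : ℝ} (hM : M ≠ 0)
    {V : Matrix (PIdx N d) (PIdx N d) ℝ} {e : PIdx N d → ℝ}
    (hV : span ℝ (range fun k : ℕ => (V ^ k) *ᵥ e) = ⊤)
    {S : Submodule ℝ (Phase N d)} (hS : ∀ x ∈ S, hamMatrix M V *ᵥ x ∈ S)
    (he : Sum.elim (0 : PIdx N d → ℝ) e ∈ S) : S = ⊤ := by
  have hpos : ∀ y, Sum.elim (0 : PIdx N d → ℝ) y ∈ S → Sum.elim y (0 : PIdx N d → ℝ) ∈ S := by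
    intro y hy
    convert S.smul_mem M (hS _ hy) using 1
    ext (x | x) <;> simp [hamMatrix_mulVec, hM]
  have hmom : ∀ y, Sum.elim (0 : PIdx N d → ℝ) y ∈ S →
      Sum.elim (0 : PIdx N d → ℝ) (V *ᵥ y) ∈ S := by
    intro y hy
    convert S.neg_mem (hS _ (hpos y hy)) using 1
    ext (x | x) <;> simp [hamMatrix_mulVec]
  have hpow : ∀ k : ℕ, Sum.elim (0 : PIdx N d → ℝ) ((V ^ k) *ᵥ e) ∈ S := by
    intro k
    induction k with
    | zero => simpa using he
    | succ k ih => simpa [pow_succ', ← mulVec_mulVec] using hmom _ ih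
  let T : Submodule ℝ (PIdx N d → ℝ) := S.comap
    ((LinearEquiv.sumArrowLequivProdArrow _ _ ℝ ℝ).symm.toLinearMap ∘ₗ LinearMap.inr ℝ _ _)
  have hT : T = ⊤ := by
    rw [eq_top_iff, ← hV, span_le]
    rintro _ ⟨k, rfl⟩
    exact hpow k
  rw [eq_top_iff]
  intro ψ _
  convert S.add_mem (hpos _ (hT.ge (mem_top (x := ψ ∘ Sum.inl))))
    (hT.ge (mem_top (x := ψ ∘ Sum.inr)))
  ext (x | x) <;> simp

theorem span_exp_smul_hamMatrix_mulVec_eq_top {M : ℝ} (hM : M ≠ 0)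
    {V : Matrix (PIdx N d) (PIdx N d) ℝ} {e : PIdx N d → ℝ}
    (hV : span ℝ (range fun k : ℕ => (V ^ k) *ᵥ e) = ⊤) :
    span ℝ ((fun s : ℝ => exp (s • hamMatrix M V) *ᵥ Sum.elim 0 e) '' Ici 0) = ⊤ :=
  eq_top_of_hamMatrix_mulVec_mem hM hV (fun _ => mulVec_mem_span_exp_smul_mulVec _ _)
    (subset_span ⟨0, self_mem_Ici, by simp⟩)

end Hamiltonian

section Collisions
variable {N d l : ℕ} (hN : 0 < N)

def setMom1 (v : Fin d → ℝ) (ψ : Phase N d) : Phase N d := fun z =>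
  match z with
  | Sum.inl x => ψ (Sum.inl x)
  | Sum.inr x => if x.1 = (⟨0, hN⟩ : Fin N) then v x.2 else ψ (Sum.inr x)

theorem JL_eq_setMom1 (J : (Fin l → ℝ) → (Fin d → ℝ) → (Fin d → ℝ)) (u : Fin l → ℝ)
    (ψ : Phase N d) : JL hN J u ψ = setMom1 hN (J u (mom1 hN ψ)) ψ :=
  rfl

theorem mom1_setMom1 (v : Fin d → ℝ) (ψ : Phase N d) : mom1 hN (setMom1 hN v ψ) = v := by
  funext j
  simp [mom1, setMom1]

theorem setMom1_setMom1 (v w : Fin d → ℝ) (ψ : Phase N d) :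
    setMom1 hN v (setMom1 hN w ψ) = setMom1 hN v ψ := by
  funext z
  rcases z with x | x
  · rfl
  · by_cases hx : x.1 = ⟨0, hN⟩ <;> simp [setMom1, hx]

theorem setMom1_mom1 (ψ : Phase N d) : setMom1 hN (mom1 hN ψ) ψ = ψ := by
  funext z
  rcases z with x | ⟨i, j⟩
  · rfl
  · by_cases hi : i = ⟨0, hN⟩ <;> simp [setMom1, mom1, hi]

theorem setMom1_mom1_add_smul_single (ψ : Phase N d) (j : Fin d) (c : ℝ) :
    setMom1 hN (mom1 hN ψ + c • Pi.single j 1) ψ =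
      ψ + c • Pi.single (Sum.inr (⟨0, hN⟩, j)) 1 := by
  funext z
  rcases z with x | ⟨i, k⟩
  · simp [setMom1]
  · by_cases hi : i = ⟨0, hN⟩ <;> simp [setMom1, mom1, hi, Pi.single_apply]

/-- Condition 2(ii) on the collision map `J`. -/
def SphereLevelCondition (J : (Fin l → ℝ) → (Fin d → ℝ) → (Fin d → ℝ)) (Oξ : Set (Fin l → ℝ)) :
    Prop :=
  (∀ p x : Fin d → ℝ, (∑ j, x j ^ 2) = (∑ j, p j ^ 2) → ∃ g ∈ Oξ, J g p = x) ∧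
    ∀ p : Fin d → ℝ, ∀ h : ℝ, 0 ≤ h → ∃ g ∈ Oξ, (∑ j, J g p j ^ 2) = h ^ 2

end Collisions

section Reachability
variable {N d l : ℕ} (hN : 0 < N) (M : ℝ) (V : Matrix (PIdx N d) (PIdx N d) ℝ)
  (J : (Fin l → ℝ) → (Fin d → ℝ) → (Fin d → ℝ)) (Oξ : Set (Fin l → ℝ))

def Reachable (m : ℕ) (ψ φ : Phase N d) : Prop :=
  ∃ (ts : ℕ → ℝ) (us : ℕ → Fin l → ℝ),
    (∀ i, 0 ≤ ts i) ∧ (∀ i, us i ∈ Oξ) ∧ Jiter hN M V J ts us ψ m = φ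

variable {hN M V J Oξ}

theorem Jiter_congr {ts ts' : ℕ → ℝ} {us us' : ℕ → Fin l → ℝ} (ψ : Phase N d) {m : ℕ}
    (hts : ∀ i < m, ts i = ts' i) (hus : ∀ i < m, us i = us' i) :
    Jiter hN M V J ts us ψ m = Jiter hN M V J ts' us' ψ m := by
  induction m with
  | zero => rfl
  | succ m ih =>
    simp only [Jiter, hts m m.lt_succ_self, hus m m.lt_succ_self,
      ih (fun i hi => hts i (hi.trans m.lt_succ_self))
        (fun i hi => hus i (hi.trans m.lt_succ_self))]

theorem reachable_zero_self (hO : Oξ.Nonempty) (ψ : Phase N d) :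
    Reachable hN M V J Oξ 0 ψ ψ :=
  ⟨fun _ => 0, fun _ => hO.some, fun _ => le_rfl, fun _ => hO.some_mem, rfl⟩

theorem Reachable.succ {m : ℕ} {ψ χ : Phase N d} (h : Reachable hN M V J Oξ m ψ χ) {t : ℝ}
    (ht : 0 ≤ t) {u : Fin l → ℝ} (hu : u ∈ Oξ) :
    Reachable hN M V J Oξ (m + 1) ψ (JL hN J u (exp (t • hamMatrix M V) *ᵥ χ)) := by
  obtain ⟨ts, us, hts, hus, rfl⟩ := h
  refine ⟨update ts m t, update us m u,
    (forall_update_iff ts (fun _ s => 0 ≤ s)).2 ⟨ht, fun i _ => hts i⟩,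
    (forall_update_iff us (fun _ g => g ∈ Oξ)).2 ⟨hu, fun i _ => hus i⟩, ?_⟩
  simp only [Jiter, update_self]
  rw [Jiter_congr ψ (fun i hi => update_of_ne hi.ne _ _) (fun i hi => update_of_ne hi.ne _ _)]

theorem Reachable.setMom1_flow (hJ : SphereLevelCondition J Oξ) {m : ℕ} {ψ χ : Phase N d}
    (h : Reachable hN M V J Oξ m ψ χ) {t : ℝ} (ht : 0 ≤ t) (v : Fin d → ℝ) :
    Reachable hN M V J Oξ (m + 2) ψ (setMom1 hN v (exp (t • hamMatrix M V) *ᵥ χ)) := by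
  obtain ⟨g₁, hg₁, hlevel⟩ :=
    hJ.2 (mom1 hN (exp (t • hamMatrix M V) *ᵥ χ)) √(∑ j, v j ^ 2) (Real.sqrt_nonneg _)
  obtain ⟨g₂, hg₂, hsphere⟩ := hJ.1 _ v (by rw [hlevel, Real.sq_sqrt (by positivity)])
  simpa [JL_eq_setMom1, mom1_setMom1, hsphere, setMom1_setMom1] using
    (h.succ ht hg₁).succ le_rfl hg₂

theorem Reachable.add_smul_single (hJ : SphereLevelCondition J Oξ) {m : ℕ} {ψ χ : Phase N d}
    (h : Reachable hN M V J Oξ m ψ χ) {t : ℝ} (ht : 0 ≤ t) (j : Fin d) (c : ℝ) :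
    Reachable hN M V J Oξ (m + 2) ψ
      (exp (t • hamMatrix M V) *ᵥ χ + c • Pi.single (Sum.inr (⟨0, hN⟩, j)) 1) := by
  rw [← setMom1_mom1_add_smul_single]
  exact h.setMom1_flow hJ ht _

variable (hN M V)

/-- The kicks are applied in order of decreasing `σ i`; `b` is a lower bound for the flight time
`u` after the last kick, so that a further kick with `σ a ≤ b` can be appended. -/
theorem exists_reachable_exp_smul_mulVec_eq_add_sum (hJ : SphereLevelCondition J Oξ)
    {ι : Type*} [DecidableEq ι] (σ c : ι → ℝ) (j : Fin d) (ψ : Phase N d) {T : ℝ}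
    (s : Finset ι) (hσT : ∀ i ∈ s, σ i ≤ T) {b : ℝ} (hbT : b ≤ T) (hbσ : ∀ i ∈ s, b ≤ σ i) :
    ∃ χ u, Reachable hN M V J Oξ (2 * #s) ψ χ ∧ b ≤ u ∧
      exp (u • hamMatrix M V) *ᵥ χ = exp (T • hamMatrix M V) *ᵥ ψ +
        ∑ i ∈ s, c i • (exp (σ i • hamMatrix M V) *ᵥ Pi.single (Sum.inr (⟨0, hN⟩, j)) 1) := by
  induction s using Finset.induction_on_min_value σ generalizing b with
  | empty =>
    obtain ⟨g, hg, -⟩ := hJ.2 0 0 le_rfl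
    exact ⟨ψ, T, reachable_zero_self ⟨g, hg⟩ ψ, hbT, by simp⟩
  | insert a s ha hmin ih =>
    obtain ⟨χ, u, hχ, hu, hflow⟩ := ih (fun i hi => hσT i (mem_insert_of_mem hi))
      (hσT a (mem_insert_self a s)) hmin
    refine ⟨exp ((u - σ a) • hamMatrix M V) *ᵥ χ + c a • Pi.single (Sum.inr (⟨0, hN⟩, j)) 1,
      σ a, ?_, hbσ a (mem_insert_self a s), ?_⟩
    · rw [card_insert_of_notMem ha, mul_add_one]
      exact hχ.add_smul_single hJ (sub_nonneg.2 hu) j (c a)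
    · rw [mulVec_add, mulVec_smul, exp_smul_mulVec_exp_smul_mulVec, add_sub_cancel, hflow,
        sum_insert ha]
      abel

end Reachability

theorem strong_controllability_general (N d l : ℕ) (hN : 0 < N) (hd : 0 < d)
    (M : ℝ) (hM : 0 < M)
    (V : Matrix (PIdx N d) (PIdx N d) ℝ)
    (hcompl : Submodule.span ℝ
        (Set.range fun k : ℕ =>
          (V ^ k).mulVec (Pi.single ((⟨0, hN⟩ : Fin N), (⟨0, hd⟩ : Fin d)) 1)) = ⊤)
    (Oξ : Set (Fin l → ℝ))
    (J : (Fin l → ℝ) → (Fin d → ℝ) → (Fin d → ℝ))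
    -- Condition 2, item 2: the image `J(O_ξ, p)` contains the sphere of radius `|p|`, and
    -- every kinetic energy level is attainable
    (hJsphere : ∀ p x : Fin d → ℝ, (∑ j, x j ^ 2) = (∑ j, p j ^ 2) → ∃ g ∈ Oξ, J g p = x)
    (hJlevel : ∀ p : Fin d → ℝ, ∀ h : ℝ, 0 ≤ h →
        ∃ g ∈ Oξ, (∑ j, J g p j ^ 2) = h ^ 2) :
    ∃ m : ℕ, 1 ≤ m ∧ ∀ ψ φ : Phase N d, ∃ (ts : ℕ → ℝ) (us : ℕ → Fin l → ℝ),
      (∀ i, 0 ≤ ts i) ∧ (∀ i, us i ∈ Oξ) ∧ Jiter hN M V J ts us ψ m = φ := by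
  set orbit := (fun s : ℝ => exp (s • hamMatrix M V) *ᵥ
    Pi.single (Sum.inr (⟨0, hN⟩, ⟨0, hd⟩)) 1) '' Ici 0
  have hspan : span ℝ orbit = ⊤ := by
    simpa only [Sum.elim_zero_single] using
      span_exp_smul_hamMatrix_mulVec_eq_top hM.ne' hcompl
  obtain ⟨w, hw, hwspan, -⟩ := exists_fun_fin_finrank_span_eq ℝ orbit
  choose σ hσ0 hσ using hw
  dsimp only at hσ
  refine ⟨2 * Module.finrank ℝ (span ℝ orbit) + 2, by omega, fun ψ φ => ?_⟩
  obtain ⟨c, hc⟩ := (mem_span_range_iff_exists_fun ℝ).1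
    (hwspan.trans hspan ▸ mem_top : φ - exp ((∑ i, σ i) • hamMatrix M V) *ᵥ ψ ∈ span ℝ (range w))
  obtain ⟨χ, u, hχ, hu, hχu⟩ := exists_reachable_exp_smul_mulVec_eq_add_sum hN M V
    ⟨hJsphere, hJlevel⟩ σ c ⟨0, hd⟩ ψ univ
    (fun i _ => single_le_sum (fun i _ => hσ0 i) (mem_univ i))
    (sum_nonneg fun i _ => hσ0 i) (fun i _ => hσ0 i)
  simp only [hσ, hc, add_sub_cancel, card_univ, Fintype.card_fin] at hχu hχ
  have hφ := hχ.setMom1_flow ⟨hJsphere, hJlevel⟩ hu (mom1 hN φ)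
  rwa [hχu, setMom1_mom1] at hφ

/-- Strong controllability: under Condition 2 on `J`, completeness of `V` and rational
independence of the square-root eigenvalues of `V`, there is an `m ≥ 1` such that from every
`ψ ∈ L` the reachable set in `m` collisions is all of `L`. -/
theorem strong_controllability (N d l : ℕ) (hN : 0 < N) (hd : 0 < d) (hl : 0 < l)
    (M : ℝ) (hM : 0 < M)
    (V : Matrix (PIdx N d) (PIdx N d) ℝ) (hV : V.PosDef)
    (hcompl : Submodule.span ℝ
        (Set.range fun k : ℕ =>
          (V ^ k).mulVec (Pi.single ((⟨0, hN⟩ : Fin N), (⟨0, hd⟩ : Fin d)) 1)) = ⊤)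
    (hratindep : LinearIndependent ℚ fun i : PIdx N d => Real.sqrt (hV.1.eigenvalues i))
    (Oξ : Set (Fin l → ℝ)) (hOξ : IsOpen Oξ)
    (J : (Fin l → ℝ) → (Fin d → ℝ) → (Fin d → ℝ))
    -- Condition 2, item 1: differentiability and almost-everywhere analyticity
    (hJdiff : Differentiable ℝ fun y : (Fin l → ℝ) × (Fin d → ℝ) => J y.1 y.2)
    (hJanalytic : ∀ᵐ x ∂(volume : Measure ((Fin l → ℝ) × (Fin d → ℝ))),
        x.1 ∈ Oξ → AnalyticAt ℝ (fun y : (Fin l → ℝ) × (Fin d → ℝ) => J y.1 y.2) x)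
    -- Condition 2, item 2: the image `J(O_ξ, p)` contains the sphere of radius `|p|`, and
    -- every kinetic energy level is attainable
    (hJsphere : ∀ p x : Fin d → ℝ, (∑ j, x j ^ 2) = (∑ j, p j ^ 2) → ∃ g ∈ Oξ, J g p = x)
    (hJlevel : ∀ p : Fin d → ℝ, ∀ h : ℝ, 0 ≤ h →
        ∃ g ∈ Oξ, (∑ j, J g p j ^ 2) = h ^ 2)
    -- Condition 2, item 3: contraction of large kinetic energies in the mean, with respect to
    -- the distribution of `ξ` with density `ρξ`
    (ρξ : (Fin l → ℝ) → ℝ) (hρξmeas : Measurable ρξ)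
    (hρξpos : ∀ y ∈ Oξ, 0 < ρξ y) (hρξzero : ∀ y ∉ Oξ, ρξ y = 0)
    (hρξint : ∫ y, ρξ y = 1)
    (K : Set (Fin d → ℝ)) (hK : IsCompact K) (α : ℝ) (hα0 : 0 < α) (hα1 : α < 1)
    (hJdrift : ∀ p ∉ K, ∫ y, (∑ j, J y p j ^ 2) * ρξ y ≤ α * ∑ j, p j ^ 2) :
    ∃ m : ℕ, 1 ≤ m ∧ ∀ ψ φ : Phase N d, ∃ (ts : ℕ → ℝ) (us : ℕ → Fin l → ℝ),
      (∀ i, 0 ≤ ts i) ∧ (∀ i, us i ∈ Oξ) ∧ Jiter hN M V J ts us ψ m = φ :=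
  strong_controllability_general N d l hN hd M hM V hcompl Oξ J hJsphere hJlevel
end

section
/- The set H^+ of symmetric positive definite n×n matrices with the completeness property is open and everywhere dense in the set H of all symmetric positive definite n×n matrices, and the complement H ∖ H^+ has Lebesgue measure zero. -/
open MeasureTheory Matrix

/-- The index set for the independent entries of a symmetric `n×n` matrix; the coordinate space
`SymIdx n → ℝ` is the `n(n+1)/2`-dimensional space of symmetric matrices with its Lebesgue
measure. -/
abbrev SymIdx (n : ℕ) := {p : Fin n × Fin n // p.1 ≤ p.2}

/-- The symmetric matrix with the given upper-triangular entries. -/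
def toMat {n : ℕ} (x : SymIdx n → ℝ) : Matrix (Fin n) (Fin n) ℝ := fun i j =>
  if h : i ≤ j then x ⟨(i, j), h⟩ else x ⟨(j, i), le_of_not_ge h⟩

/-- `H`: the set of (coordinates of) symmetric positive definite matrices. -/
def Hset (n : ℕ) : Set (SymIdx n → ℝ) := {x | (toMat x).PosDef}

/-- The completeness property: the vectors `V^k e₁`, `k ≥ 0`, span all of `ℝ^n`. -/
def CompleteProp {n : ℕ} (hn : 0 < n) (x : SymIdx n → ℝ) : Prop :=
  Submodule.span ℝ
    (Set.range fun k : ℕ => ((toMat x) ^ k).mulVec (Pi.single (⟨0, hn⟩ : Fin n) 1)) = ⊤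

/-- `H^{+}`: symmetric positive definite matrices with the completeness property. -/
def Hp {n : ℕ} (hn : 0 < n) : Set (SymIdx n → ℝ) :=
  {x | (toMat x).PosDef ∧ CompleteProp hn x}

/-!
A matrix `V` has the completeness property iff the Krylov vectors `V^k e₁`, `k < n`, are
linearly independent (by Cayley–Hamilton every higher power is a combination of these), i.e. iff
the Krylov determinant `det [e₁, V e₁, …, V^{n-1} e₁]` is nonzero. This determinant is a
polynomial in the entries of `V`, and it does not vanish at the adjacency matrix of the path
graph, for which `e₁` generates every standard basis vector. The zero set of a nonzero real
polynomial is Lebesgue-null (Fubini and induction on the number of variables), so its complement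
is dense; intersecting with the open set `H` gives all three claims.
-/

namespace MvPolynomial

theorem volume_setOf_eval_eq_zero_fin {d : ℕ} {p : MvPolynomial (Fin d) ℝ} (hp : p ≠ 0) :
    volume {x : Fin d → ℝ | eval x p = 0} = 0 := by
  induction d with
  | zero =>
    obtain ⟨a, rfl⟩ := C_surjective (Fin 0) p
    simp [C_eq_zero.not.mp hp]
  | succ d ih =>
    set q := finSuccEquiv ℝ d p
    obtain ⟨k, hk⟩ : ∃ k, q.coeff k ≠ 0 :=
      not_forall.mp (Polynomial.ext_iff.not.mp ((finSuccEquiv ℝ d).map_ne_zero_iff.mpr hp))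
    have hcont : Continuous fun z : ℝ × (Fin d → ℝ) => eval (Fin.cons z.1 z.2) p :=
      (continuous_eval p).comp (by fun_prop)
    have hs : MeasurableSet {z : ℝ × (Fin d → ℝ) | eval (Fin.cons z.1 z.2) p = 0} :=
      measurableSet_eq_fun hcont.measurable measurable_const
    have hmp := (volume_preserving_piFinSuccAbove (fun _ : Fin (d + 1) => ℝ) 0).symm
    have hpre : (MeasurableEquiv.piFinSuccAbove (fun _ : Fin (d + 1) => ℝ) 0).symm ⁻¹'
        {x | eval x p = 0} = {z : ℝ × (Fin d → ℝ) | eval (Fin.cons z.1 z.2) p = 0} := by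
      ext z
      simp [MeasurableEquiv.piFinSuccAbove, Fin.consEquiv]
    rw [← hmp.measure_preimage (measurableSet_eq_fun (continuous_eval p).measurable
      measurable_const).nullMeasurableSet, hpre, Measure.volume_eq_prod,
      Measure.prod_apply_symm hs]
    -- Off the null zero set of the coefficient `q.coeff k`, the slice is the finite root set of
    -- a nonzero univariate polynomial.
    refine (lintegral_congr_ae ?_).trans lintegral_zero
    filter_upwards [measure_eq_zero_iff_ae_notMem.mp (ih hk)] with y hy
    have hqy : q.map (eval y) ≠ 0 := fun h => hy (by simpa using congrArg (·.coeff k) h)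
    refine Set.Finite.measure_zero ((Polynomial.finite_setOfPred_isRoot hqy).subset ?_) _
    intro t ht
    simpa [eval_eq_eval_mv_eval'] using ht

theorem volume_setOf_eval_eq_zero {ι : Type*} [Fintype ι] {p : MvPolynomial ι ℝ}
    (hp : p ≠ 0) : volume {x : ι → ℝ | eval x p = 0} = 0 := by
  let e := Fintype.equivFin ι
  have hmp := (volume_measurePreserving_piCongrLeft (fun _ : Fin (Fintype.card ι) => ℝ) e).symm
  have hpre : (MeasurableEquiv.piCongrLeft (fun _ => ℝ) e).symm ⁻¹' {x | eval x p = 0} =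
      {x | eval x (rename e p) = 0} := by
    ext x
    simp only [Set.mem_preimage, Set.mem_ofPred_eq, eval_rename]
    rfl
  rw [← hmp.measure_preimage (measurableSet_eq_fun (continuous_eval p).measurable
    measurable_const).nullMeasurableSet, hpre]
  exact volume_setOf_eval_eq_zero_fin
    (((rename_injective e e.injective).ne_iff' (map_zero _)).mpr hp)

theorem dense_setOf_eval_ne_zero {ι : Type*} [Fintype ι] {p : MvPolynomial ι ℝ}
    (hp : p ≠ 0) : Dense {x : ι → ℝ | eval x p ≠ 0} :=
  Measure.dense_of_ae (μ := volume)
    (measure_eq_zero_iff_ae_notMem.mp (volume_setOf_eval_eq_zero hp))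

end MvPolynomial

theorem Matrix.isOpen_setOf_posDef {X m : Type*} [TopologicalSpace X] [Fintype m]
    {f : X → Matrix m m ℝ} (hf : Continuous f) (hf_herm : ∀ x, (f x).IsHermitian) :
    IsOpen {x | (f x).PosDef} := by
  refine isOpen_iff_mem_nhds.2 fun x₀ hx₀ => ?_
  have hpos : ∀ᶠ x in nhds x₀, ∀ v ∈ Metric.sphere (0 : m → ℝ) 1, 0 < v ⬝ᵥ (f x *ᵥ v) := by
    refine (isCompact_sphere 0 1).eventually_forall_of_forall_eventually fun v hv => ?_
    have hcont : Continuous fun z : X × (m → ℝ) => z.2 ⬝ᵥ (f z.1 *ᵥ z.2) := by fun_prop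
    exact continuousAt_const.eventually_lt hcont.continuousAt
      (by simpa using hx₀.dotProduct_mulVec_pos (ne_zero_of_mem_unit_sphere ⟨v, hv⟩))
  filter_upwards [hpos] with x hx
  refine posDef_iff_dotProduct_mulVec.2 ⟨hf_herm x, fun v hv => ?_⟩
  have h := hx (‖v‖⁻¹ • v) (by simp [norm_smul, hv])
  rw [mulVec_smul, dotProduct_smul, smul_dotProduct, smul_eq_mul, smul_eq_mul] at h
  have hinv : 0 ≤ ‖v‖⁻¹ := by positivity
  simpa using pos_of_mul_pos_right (pos_of_mul_pos_right h hinv) hinv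

namespace Matrix

variable {n : ℕ}

def krylov {R : Type*} [CommRing R] (A : Matrix (Fin n) (Fin n) R) (v : Fin n → R) :
    Matrix (Fin n) (Fin n) R :=
  of fun k : Fin n => A ^ (k : ℕ) *ᵥ v

theorem map_krylov {R S : Type*} [CommRing R] [CommRing S] (f : R →+* S)
    (A : Matrix (Fin n) (Fin n) R) (v : Fin n → R) :
    (krylov A v).map f = krylov (A.map f) (f ∘ v) := by
  ext k i
  simp [krylov, RingHom.map_mulVec, Matrix.map_pow]

theorem mulVec_mem_span_range_pow_mulVec {R : Type*} [CommRing R]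
    (A : Matrix (Fin n) (Fin n) R) (v : Fin n → R) {w : Fin n → R}
    (hw : w ∈ Submodule.span R (Set.range fun k : ℕ => A ^ k *ᵥ v)) :
    A *ᵥ w ∈ Submodule.span R (Set.range fun k : ℕ => A ^ k *ᵥ v) := by
  refine (Submodule.span_le (p := (Submodule.span R _).comap A.mulVecLin)).2 ?_ hw
  rintro _ ⟨k, rfl⟩
  exact Submodule.subset_span ⟨k + 1, by simp [pow_succ', mulVec_mulVec]⟩

variable {K : Type*} [Field K]

theorem span_range_pow_mulVec (A : Matrix (Fin n) (Fin n) K) (v : Fin n → K) :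
    Submodule.span K (Set.range fun k : ℕ => A ^ k *ᵥ v) =
      Submodule.span K (Set.range fun k : Fin n => A ^ (k : ℕ) *ᵥ v) := by
  refine le_antisymm (Submodule.span_le.2 ?_) (Submodule.span_mono ?_)
  · rintro _ ⟨k, rfl⟩
    have hdeg : (Polynomial.X ^ k %ₘ A.charpoly).degree < n := by
      simpa using Polynomial.degree_modByMonic_lt (Polynomial.X ^ k) A.charpoly_monic
    change A ^ k *ᵥ v ∈ _
    rw [pow_eq_aeval_mod_charpoly, Polynomial.aeval_eq_sum_range, sum_mulVec]
    refine Submodule.sum_mem _ fun i _ => ?_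
    rw [smul_mulVec]
    by_cases hi : i < n
    · exact Submodule.smul_mem _ _ (Submodule.subset_span ⟨⟨i, hi⟩, rfl⟩)
    · rw [Polynomial.coeff_eq_zero_of_degree_lt (hdeg.trans_le (by exact_mod_cast not_lt.1 hi)),
        zero_smul]
      exact Submodule.zero_mem _
  · rintro _ ⟨k, rfl⟩
    exact ⟨k, rfl⟩

theorem span_range_pow_mulVec_eq_top_iff (A : Matrix (Fin n) (Fin n) K) (v : Fin n → K) :
    Submodule.span K (Set.range fun k : ℕ => A ^ k *ᵥ v) = ⊤ ↔ (krylov A v).det ≠ 0 := by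
  rw [span_range_pow_mulVec, ← isUnit_iff_ne_zero, ← isUnit_iff_isUnit_det,
    ← linearIndependent_rows_iff_isUnit]
  have hcard : Fintype.card (Fin n) = Module.finrank K (Fin n → K) := by simp
  exact ⟨fun h => linearIndependent_of_top_le_span_of_card_eq_finrank h.ge hcard,
    fun h => h.span_eq_top_of_card_eq_finrank' hcard⟩

end Matrix

section

variable {n : ℕ}

theorem isHermitian_toMat (x : SymIdx n → ℝ) : (toMat x).IsHermitian := by
  ext i j
  simp only [toMat, conjTranspose_apply, star_trivial]
  split_ifs with h₁ h₂ h₂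
  · obtain rfl := le_antisymm h₁ h₂
    rfl
  · rfl
  · rfl
  · exact absurd (le_of_not_ge h₁) h₂

theorem continuous_toMat : Continuous (toMat : (SymIdx n → ℝ) → Matrix (Fin n) (Fin n) ℝ) :=
  continuous_pi fun i => continuous_pi fun j => by
    simp only [toMat]
    split_ifs <;> exact continuous_apply _

theorem isOpen_Hset : IsOpen (Hset n) :=
  isOpen_setOf_posDef continuous_toMat isHermitian_toMat

noncomputable def symMvPolynomialX (n : ℕ) :
    Matrix (Fin n) (Fin n) (MvPolynomial (SymIdx n) ℝ) := fun i j =>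
  if h : i ≤ j then MvPolynomial.X ⟨(i, j), h⟩ else MvPolynomial.X ⟨(j, i), le_of_not_ge h⟩

theorem map_eval_symMvPolynomialX (x : SymIdx n → ℝ) :
    (symMvPolynomialX n).map (MvPolynomial.eval x) = toMat x := by
  ext i j
  simp only [symMvPolynomialX, toMat, map_apply]
  split_ifs <;> simp

noncomputable def krylovDetPoly (hn : 0 < n) : MvPolynomial (SymIdx n) ℝ :=
  (krylov (symMvPolynomialX n) (Pi.single ⟨0, hn⟩ 1)).det

theorem eval_krylovDetPoly (hn : 0 < n) (x : SymIdx n → ℝ) :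
    MvPolynomial.eval x (krylovDetPoly hn) = (krylov (toMat x) (Pi.single ⟨0, hn⟩ 1)).det := by
  rw [krylovDetPoly, RingHom.map_det, RingHom.mapMatrix_apply, map_krylov,
    map_eval_symMvPolynomialX]
  congr 2
  ext j
  by_cases h : j = ⟨0, hn⟩ <;> simp [h]

theorem completeProp_iff (hn : 0 < n) (x : SymIdx n → ℝ) :
    CompleteProp hn x ↔ MvPolynomial.eval x (krylovDetPoly hn) ≠ 0 := by
  rw [eval_krylovDetPoly]
  exact span_range_pow_mulVec_eq_top_iff _ _

def pathAdj (n : ℕ) : SymIdx n → ℝ := fun p => if (p.1.2 : ℕ) = p.1.1 + 1 then 1 else 0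

theorem toMat_pathAdj (i j : Fin n) :
    toMat (pathAdj n) i j = if (j : ℕ) = i + 1 ∨ (i : ℕ) = j + 1 then 1 else 0 := by
  simp only [toMat, pathAdj, Fin.le_iff_val_le_val]
  split_ifs <;> first | rfl | omega

-- `stdVec n m` is the `m`-th standard basis vector, and `0` for `m ≥ n`; this makes the relation
-- `A e_{m+1} = e_m + e_{m+2}` for the path adjacency matrix `A` hold up to the last index.
def stdVec (n m : ℕ) : Fin n → ℝ := fun j => if (j : ℕ) = m then 1 else 0

theorem stdVec_eq_single {m : ℕ} (hm : m < n) : stdVec n m = Pi.single ⟨m, hm⟩ 1 := by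
  ext j
  simp [stdVec, Pi.single_apply, Fin.ext_iff]

theorem toMat_pathAdj_mulVec_stdVec {m : ℕ} (hm : m < n) :
    toMat (pathAdj n) *ᵥ stdVec n m =
      fun j : Fin n => if m = (j : ℕ) + 1 ∨ (j : ℕ) = m + 1 then 1 else 0 := by
  ext j
  simp [stdVec_eq_single hm, toMat_pathAdj]

theorem completeProp_pathAdj (hn : 0 < n) : CompleteProp hn (pathAdj n) := by
  set W := Submodule.span ℝ
    (Set.range fun k : ℕ => (toMat (pathAdj n) ^ k) *ᵥ Pi.single (⟨0, hn⟩ : Fin n) 1)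
  have hW : ∀ m, stdVec n m ∈ W ∧ stdVec n (m + 1) ∈ W := by
    intro m
    induction m with
    | zero =>
      have h₀ : stdVec n 0 ∈ W :=
        Submodule.subset_span ⟨0, by simp only [pow_zero, one_mulVec, stdVec_eq_single hn]⟩
      refine ⟨h₀, ?_⟩
      convert mulVec_mem_span_range_pow_mulVec _ _ h₀ using 1
      rw [toMat_pathAdj_mulVec_stdVec hn]
      ext j
      simp [stdVec]
    | succ m ih =>
      refine ⟨ih.2, ?_⟩
      by_cases hm : m + 1 < n
      · convert sub_mem (mulVec_mem_span_range_pow_mulVec _ _ ih.2) ih.1 using 1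
        rw [toMat_pathAdj_mulVec_stdVec hm]
        ext j
        simp only [stdVec, Pi.sub_apply]
        split_ifs <;> (try norm_num) <;> omega
      · convert W.zero_mem
        ext j
        simp [stdVec]
        omega
  refine eq_top_iff.2 ((Pi.basisFun ℝ (Fin n)).span_eq.ge.trans (Submodule.span_le.2 ?_))
  rintro _ ⟨i, rfl⟩
  rw [Pi.basisFun_apply, ← stdVec_eq_single i.isLt]
  exact (hW i).1

theorem krylovDetPoly_ne_zero (hn : 0 < n) : krylovDetPoly hn ≠ 0 := fun h => by
  simpa [h] using (completeProp_iff hn (pathAdj n)).1 (completeProp_pathAdj hn)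

theorem Hp_eq_Hset_inter (hn : 0 < n) :
    Hp hn = Hset n ∩ {x | MvPolynomial.eval x (krylovDetPoly hn) ≠ 0} := by
  ext x
  exact and_congr_right fun _ => completeProp_iff hn x

end

/-- `H^{+}` is open, everywhere dense in `H`, and the complement `H ∖ H^{+}` has Lebesgue
measure zero. -/
theorem Hp_open_dense_and_complement_null (n : ℕ) (hn : 0 < n) :
    IsOpen (Hp hn) ∧ Hset n ⊆ closure (Hp hn) ∧ volume (Hset n \ Hp hn) = 0 := by
  have hP := krylovDetPoly_ne_zero hn
  rw [Hp_eq_Hset_inter]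
  refine ⟨isOpen_Hset.inter (isOpen_ne_fun (MvPolynomial.continuous_eval _) continuous_const),
    (MvPolynomial.dense_setOf_eval_ne_zero hP).open_subset_closure_inter isOpen_Hset,
    measure_mono_null (fun x hx => ?_) (MvPolynomial.volume_setOf_eval_eq_zero hP)⟩
  simpa [hx.1] using hx.2
end

section
/- Let V be a symmetric positive definite N×N real matrix and Λ' ⊆ {1,…,N}. If the span of {V^k e_i : i ∈ Λ', k ≥ 0} equals all of ℝ^N, then the multiplicity of every eigenvalue of V is at most |Λ'|, the cardinality of Λ'. -/
/-!
Let `g = f - μ`. Since `f x = g x + μ x`, every subspace containing `range g` is `f`-invariant;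
so `range g + span {v i : i ∈ s}` contains all `f ^ k (v i)` and is the whole space. Hence
`dim V ≤ rank g + |s|`, and rank–nullity turns this into `dim ker g ≤ |s|`.
-/

open Matrix Module

namespace Module.End

variable {K V : Type*} [Field K] [AddCommGroup V] [Module K V]

lemma apply_mem_of_range_sub_smul_one_le (f : End K V) (μ : K) {W : Submodule K V}
    (hW : LinearMap.range (f - μ • 1) ≤ W) (x : V) (hx : x ∈ W) : f x ∈ W := by
  have hfx : f x = (f - μ • 1) x + μ • x := by simp
  rw [hfx]
  exact W.add_mem (hW (LinearMap.mem_range_self _ x)) (W.smul_mem μ hx)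

theorem finrank_eigenspace_le_card [FiniteDimensional K V] {ι : Type*} (f : End K V)
    (v : ι → V) (s : Finset ι)
    (hs : Submodule.span K {x | ∃ k : ℕ, ∃ i ∈ s, x = (f ^ k) (v i)} = ⊤) (μ : K) :
    finrank K (f.eigenspace μ) ≤ s.card := by
  classical
  rw [eigenspace_def]
  set g := f - μ • 1
  set S := Submodule.span K (s.image v : Set V)
  have hcover : LinearMap.range g ⊔ S = ⊤ := by
    rw [eq_top_iff, ← hs, Submodule.span_le]
    rintro _ ⟨k, i, hi, rfl⟩
    refine pow_apply_mem_of_forall_mem k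
      (apply_mem_of_range_sub_smul_one_le f μ le_sup_left) _ ?_
    exact Submodule.mem_sup_right (Submodule.subset_span (Finset.mem_image_of_mem v hi))
  have hle : finrank K V ≤ finrank K (LinearMap.range g) + s.card :=
    calc finrank K V = finrank K ↥(LinearMap.range g ⊔ S) := by rw [hcover, finrank_top]
      _ ≤ finrank K (LinearMap.range g) + finrank K S :=
        Submodule.finrank_add_le_finrank_add_finrank _ _
      _ ≤ finrank K (LinearMap.range g) + s.card := by
        gcongr
        exact (finrank_span_finset_le_card _).trans s.card_image_le
  have hrank := LinearMap.finrank_range_add_finrank_ker g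
  omega

end Module.End

theorem eigenvalue_multiplicity_le_of_span_eq_top_general (N : ℕ)
    (V : Matrix (Fin N) (Fin N) ℝ) (Λ' : Finset (Fin N))
    (hspan : Submodule.span ℝ
        {x : Fin N → ℝ | ∃ k : ℕ, ∃ i ∈ Λ', x = (V ^ k).mulVec (Pi.single i 1)} = ⊤)
    (μ : ℝ) :
    Module.finrank ℝ (Module.End.eigenspace (Matrix.mulVecLin V) μ) ≤ Λ'.card := by
  refine Module.End.finrank_eigenspace_le_card _ (fun i => Pi.single i 1) Λ' ?_ μ
  simpa only [← Matrix.toLin'_apply', ← Matrix.toLin'_pow, Matrix.toLin'_apply] using hspan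

/-- If the span of `{V^k e_i : i ∈ Λ', k ≥ 0}` is all of `ℝ^N`, then the multiplicity of every
eigenvalue of the symmetric positive definite matrix `V` is at most `|Λ'|`. -/
theorem eigenvalue_multiplicity_le_of_span_eq_top (N : ℕ)
    (V : Matrix (Fin N) (Fin N) ℝ) (hV : V.PosDef) (Λ' : Finset (Fin N))
    (hspan : Submodule.span ℝ
        {x : Fin N → ℝ | ∃ k : ℕ, ∃ i ∈ Λ', x = (V ^ k).mulVec (Pi.single i 1)} = ⊤)
    (μ : ℝ) :
    Module.finrank ℝ (Module.End.eigenspace (Matrix.mulVecLin V) μ) ≤ Λ'.card :=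
  eigenvalue_multiplicity_le_of_span_eq_top_general N V Λ' hspan μ
end
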